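/- For every complex number q with 0 < |q| < 1, ∑_{i,j,k≥0} q^{i²+j²+k²} / ((q)_{i+j−k} (q)_{i+k−j} (q)_{j+k−i}) = ∑_{i,j≥0} q^{i²+j²+(i−j)²} / ((q)_{2i} (q)_{2j}), where on the left-hand side a summand is 0 whenever any of i+j−k, i+k−j, j+k−i is negative (convention 1/(q)_n = 0 for n < 0). Both series converge absolutely. -/

import Mathlib

open Finset

/-- The finite q-Pochhammer symbol `(a;p)_n = ∏_{j=0}^{n-1} (1 - a pʲ)`. -/
noncomputable def qp (a p : ℂ) (n : ℕ) : ℂ := ∏ j ∈ Finset.range n, (1 - a * p ^ j)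

/-- `1/(q;q)_n`, with the convention that it is `0` for `n < 0`. -/
noncomputable def iqp (q : ℂ) (n : ℤ) : ℂ := if 0 ≤ n then (qp q q n.toNat)⁻¹ else 0

/-- The summand of the triple series on the right of (1.17):
`q^{i²+j²+k²}/((q)_{i+j−k}(q)_{i+k−j}(q)_{j+k−i})`, which is `0` when any of
`i+j−k, i+k−j, j+k−i` is negative. -/
noncomputable def triSum (q : ℂ) (p : ℕ × ℕ × ℕ) : ℂ :=
  q ^ (p.1 ^ 2 + p.2.1 ^ 2 + p.2.2 ^ 2) *
    iqp q ((p.1 : ℤ) + p.2.1 - p.2.2) * iqp q ((p.1 : ℤ) + p.2.2 - p.2.1) *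
    iqp q ((p.2.1 : ℤ) + p.2.2 - p.1)

/-- The summand of the double series (5.2): `q^{i²+j²+(i−j)²}/((q)_{2i}(q)_{2j})`. -/
noncomputable def flatSum (q : ℂ) (p : ℕ × ℕ) : ℂ :=
  q ^ (((p.1 : ℤ) ^ 2 + (p.2 : ℤ) ^ 2 + ((p.1 : ℤ) - p.2) ^ 2).toNat) /
    (qp q q (2 * p.1) * qp q q (2 * p.2))

/-! ### Basic facts about `qp` -/

lemma qp_zero (q : ℂ) : qp q q 0 = 1 := by simp [qp]

lemma qp_succ (q : ℂ) (n : ℕ) : qp q q (n + 1) = qp q q n * (1 - q ^ (n + 1)) := by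
  rw [qp, Finset.prod_range_succ, ← qp, ← pow_succ']

lemma factor_ne {q : ℂ} (hq1 : ‖q‖ < 1) (n : ℕ) : (1 : ℂ) - q ^ (n + 1) ≠ 0 := by
  intro h
  have h1 : q ^ (n + 1) = 1 := by linear_combination -h
  have h2 : ‖q‖ ^ (n + 1) < 1 := by
    calc ‖q‖ ^ (n + 1) ≤ ‖q‖ ^ 1 :=
          pow_le_pow_of_le_one (norm_nonneg q) hq1.le (by omega)
      _ < 1 := by simpa using hq1
  rw [← norm_pow, h1] at h2
  simp at h2

lemma qp_ne {q : ℂ} (hq1 : ‖q‖ < 1) (n : ℕ) : qp q q n ≠ 0 := by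
  rw [qp]
  refine Finset.prod_ne_zero_iff.mpr fun j _ => ?_
  have := factor_ne hq1 j
  rwa [pow_succ'] at this

lemma inv_qp_succ {q : ℂ} (hq1 : ‖q‖ < 1) (n : ℕ) :
    (1 - q ^ (n + 1)) * (qp q q (n + 1))⁻¹ = (qp q q n)⁻¹ := by
  rw [qp_succ, mul_inv, mul_comm ((qp q q n)⁻¹), ← mul_assoc,
    mul_inv_cancel₀ (factor_ne hq1 n), one_mul]

/-! ### The key finite identity -/

/-- `Sk q n a = ∑_{m=0}^{n} q^{m(m+a)}/((q)_m (q)_{m+a} (q)_{n-m})`. -/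
noncomputable def Sk (q : ℂ) (n a : ℕ) : ℂ :=
  ∑ m ∈ range (n + 1),
    q ^ (m * (m + a)) * ((qp q q m)⁻¹ * ((qp q q (m + a))⁻¹ * (qp q q (n - m))⁻¹))

lemma Sk_rec {q : ℂ} (hq1 : ‖q‖ < 1) (n a : ℕ) :
    (1 - q ^ (n + 1)) * Sk q (n + 1) a = Sk q n a + q ^ (n + a + 1) * Sk q n (a + 1) := by
  rw [Sk, Finset.mul_sum]
  have step : ∀ m ∈ range (n + 2),
      (1 - q ^ (n + 1)) *
          (q ^ (m * (m + a)) *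
            ((qp q q m)⁻¹ * ((qp q q (m + a))⁻¹ * (qp q q (n + 1 - m))⁻¹))) =
        q ^ (m * (m + a)) *
            ((qp q q m)⁻¹ *
              ((qp q q (m + a))⁻¹ * ((1 - q ^ (n + 1 - m)) * (qp q q (n + 1 - m))⁻¹))) +
          q ^ (m * (m + a)) * q ^ (n + 1 - m) *
            ((1 - q ^ m) * (qp q q m)⁻¹ * ((qp q q (m + a))⁻¹ * (qp q q (n + 1 - m))⁻¹)) := by
    intro m hm
    have hm' : m ≤ n + 1 := by
      have := mem_range.mp hm; omega
    have hq : q ^ (n + 1 - m) * q ^ m = q ^ (n + 1) := by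
      rw [← pow_add, Nat.sub_add_cancel hm']
    linear_combination (q ^ (m * (m + a)) *
      ((qp q q m)⁻¹ * ((qp q q (m + a))⁻¹ * (qp q q (n + 1 - m))⁻¹))) * hq
  rw [Finset.sum_congr rfl step, Finset.sum_add_distrib]
  have hA : ∑ m ∈ range (n + 2),
      q ^ (m * (m + a)) *
        ((qp q q m)⁻¹ * ((qp q q (m + a))⁻¹ * ((1 - q ^ (n + 1 - m)) * (qp q q (n + 1 - m))⁻¹)))
      = Sk q n a := by
    rw [Finset.sum_range_succ]
    have hlast : (1 : ℂ) - q ^ (n + 1 - (n + 1)) = 0 := by simp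
    rw [hlast]
    simp only [zero_mul, mul_zero, add_zero]
    rw [Sk]
    refine Finset.sum_congr rfl fun m hm => ?_
    have hm' : m ≤ n := by have := mem_range.mp hm; omega
    have h1 : n + 1 - m = (n - m) + 1 := by omega
    rw [h1, inv_qp_succ hq1]
  have hB : ∑ m ∈ range (n + 2),
      q ^ (m * (m + a)) * q ^ (n + 1 - m) *
        ((1 - q ^ m) * (qp q q m)⁻¹ * ((qp q q (m + a))⁻¹ * (qp q q (n + 1 - m))⁻¹))
      = q ^ (n + a + 1) * Sk q n (a + 1) := by
    rw [Finset.sum_range_succ']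
    have h0 : (1 : ℂ) - q ^ 0 = 0 := by simp
    simp only [pow_zero] at h0 ⊢
    rw [show (1 : ℂ) - 1 = 0 by ring]
    simp only [zero_mul, mul_zero, add_zero]
    rw [Sk, Finset.mul_sum]
    refine Finset.sum_congr rfl fun m hm => ?_
    have hm' : m ≤ n := by have := mem_range.mp hm; omega
    have h1 : n + 1 - (m + 1) = n - m := by omega
    have h2 : (1 - q ^ (m + 1)) * (qp q q (m + 1))⁻¹ = (qp q q m)⁻¹ := inv_qp_succ hq1 m
    have h3 : m + 1 + a = (m + a) + 1 := by omega
    have h4 : q ^ ((m + 1) * (m + 1 + a)) * q ^ (n - m) =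
        q ^ (n + a + 1) * q ^ (m * (m + (a + 1))) := by
      rw [← pow_add, ← pow_add]
      congr 1
      have : (m + 1) * (m + 1 + a) = m * (m + (a + 1)) + (m + a + 1) := by ring
      omega
    rw [h1, h3, h2]
    simp only [show m + (a + 1) = m + a + 1 from by omega]
    have h5 : q ^ ((m + 1) * (m + a + 1)) * q ^ (n - m) =
        q ^ (n + a + 1) * q ^ (m * (m + a + 1)) := by
      rw [← pow_add, ← pow_add]
      congr 1
      have : (m + 1) * (m + a + 1) = m * (m + a + 1) + (m + a + 1) := by ring
      omega
    linear_combination ((qp q q m)⁻¹ * ((qp q q (m + a + 1))⁻¹ * (qp q q (n - m))⁻¹)) * h5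
  rw [hA, hB]

lemma Sk_eq {q : ℂ} (hq1 : ‖q‖ < 1) :
    ∀ n a : ℕ, Sk q n a = (qp q q n)⁻¹ * (qp q q (n + a))⁻¹ := by
  intro n
  induction n with
  | zero => intro a; simp [Sk, qp_zero]
  | succ n ih =>
    intro a
    have h := Sk_rec hq1 n a
    rw [ih a, ih (a + 1)] at h
    simp only [← add_assoc] at h
    have hne := factor_ne hq1 n
    have hS : Sk q (n + 1) a = (1 - q ^ (n + 1))⁻¹ *
        ((qp q q n)⁻¹ * (qp q q (n + a))⁻¹ +
          q ^ (n + a + 1) * ((qp q q n)⁻¹ * (qp q q (n + a + 1))⁻¹)) := by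
      rw [← h, inv_mul_cancel_left₀ hne]
    have h1 := qp_ne hq1 n
    have h2 := qp_ne hq1 (n + a)
    have h3 := factor_ne hq1 (n + a)
    rw [hS, show n + 1 + a = n + a + 1 by omega, qp_succ q n, qp_succ q (n + a)]
    simp only [mul_inv]
    linear_combination (-((1 - q ^ (n + 1))⁻¹ * (qp q q n)⁻¹ * (qp q q (n + a))⁻¹)) *
      mul_inv_cancel₀ (factor_ne hq1 (n + a))

/-! ### Uniform lower bound for `|qp q q n|` -/

lemma weier (a : ℕ → ℝ) (h0 : ∀ j, 0 ≤ a j) (h1 : ∀ j, a j ≤ 1) :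
    ∀ n, 1 - ∑ j ∈ range n, a j ≤ ∏ j ∈ range n, (1 - a j) := by
  intro n
  induction n with
  | zero => simp
  | succ n ih =>
    rw [prod_range_succ, sum_range_succ]
    have hs : (0:ℝ) ≤ ∑ j ∈ range n, a j := sum_nonneg fun j _ => h0 j
    nlinarith [mul_nonneg (sub_nonneg.mpr ih) (sub_nonneg.mpr (h1 n)),
      mul_nonneg hs (h0 n), h0 n, h1 n]

lemma geo_le {x : ℝ} (hx0 : 0 ≤ x) (hx1 : x < 1) (m : ℕ) :
    ∑ j ∈ range m, x ^ j ≤ (1 - x)⁻¹ := by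
  rw [geom_sum_eq (by intro h; rw [h] at hx1; exact lt_irrefl 1 hx1) m]
  have h : (x ^ m - 1) / (x - 1) = (1 - x ^ m) * (1 - x)⁻¹ := by
    rw [div_eq_mul_inv, show x - 1 = -(1 - x) by ring, inv_neg]; ring
  rw [h]
  have h1 : 1 - x ^ m ≤ 1 := by nlinarith [pow_nonneg hx0 m]
  have h2 : (0:ℝ) ≤ (1 - x)⁻¹ := inv_nonneg.mpr (by linarith)
  nlinarith

lemma qp_lower {q : ℂ} (hq1 : ‖q‖ < 1) :
    ∃ c : ℝ, 0 < c ∧ ∀ n, c ≤ ‖qp q q n‖ := by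
  set x := ‖q‖ with hxdef
  have hx0 : 0 ≤ x := norm_nonneg q
  have hfac : ∀ j : ℕ, x ^ (j + 1) < 1 := fun j => pow_lt_one₀ hx0 hq1 (by omega)
  have hQpos : ∀ n, 0 < ∏ j ∈ range n, (1 - x ^ (j + 1)) :=
    fun n => prod_pos fun j _ => by linarith [hfac j]
  have habs : ∀ n, ∏ j ∈ range n, (1 - x ^ (j + 1)) ≤ ‖qp q q n‖ := by
    intro n
    rw [qp, norm_prod]
    refine prod_le_prod (fun j _ => by linarith [hfac j]) fun j _ => ?_
    have h1 : ‖q * q ^ j‖ = x ^ (j + 1) := by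
      rw [norm_mul, norm_pow, ← pow_succ']
    calc 1 - x ^ (j + 1) = ‖(1:ℂ)‖ - ‖q * q ^ j‖ := by
          rw [h1, norm_one]
      _ ≤ ‖1 - q * q ^ j‖ := norm_sub_norm_le _ _
      _ = ‖1 - q * q ^ j‖ := rfl
  obtain ⟨N, hN⟩ := exists_pow_lt_of_lt_one (show (0:ℝ) < (1 - x) / 2 by linarith) hq1
  refine ⟨(∏ j ∈ range N, (1 - x ^ (j + 1))) / 2, div_pos (hQpos N) two_pos, fun n => ?_⟩
  rcases le_or_gt n N with h | h
  · have hle : ∏ j ∈ range N, (1 - x ^ (j + 1)) ≤ ∏ j ∈ range n, (1 - x ^ (j + 1)) := by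
      rw [show N = n + (N - n) by omega, prod_range_add]
      have ht : ∏ j ∈ range (N - n), (1 - x ^ (n + j + 1)) ≤ 1 :=
        prod_le_one (fun j _ => by linarith [hfac (n + j)])
          (fun j _ => by nlinarith [pow_nonneg hx0 (n + j + 1)])
      have h0 : (0:ℝ) ≤ ∏ j ∈ range (N - n), (1 - x ^ (n + j + 1)) :=
        prod_nonneg fun j _ => by linarith [hfac (n + j)]
      nlinarith [hQpos n]
    linarith [habs n, hQpos N]
  · have hm : n = N + (n - N) := by omega
    have hT : (1:ℝ) / 2 ≤ ∏ j ∈ range (n - N), (1 - x ^ (N + j + 1)) := by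
      have hw := weier (fun j => x ^ (N + j + 1)) (fun j => pow_nonneg hx0 _)
        (fun j => le_of_lt (hfac (N + j))) (n - N)
      have hsum : ∑ j ∈ range (n - N), x ^ (N + j + 1) ≤ x ^ N * (1 - x)⁻¹ := by
        have e : ∀ j ∈ range (n - N), x ^ (N + j + 1) = x ^ (N + 1) * x ^ j := by
          intro j _; rw [← pow_add]; congr 1; omega
        rw [Finset.sum_congr rfl e, ← Finset.mul_sum]
        have g := geo_le hx0 hq1 (n - N)
        have hx1 : x ^ (N + 1) ≤ x ^ N := pow_le_pow_of_le_one hx0 hq1.le (by omega)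
        have hgn : (0:ℝ) ≤ (1 - x)⁻¹ := inv_nonneg.mpr (by linarith)
        calc x ^ (N + 1) * ∑ j ∈ range (n - N), x ^ j
            ≤ x ^ (N + 1) * (1 - x)⁻¹ :=
              mul_le_mul_of_nonneg_left g (pow_nonneg hx0 _)
          _ ≤ x ^ N * (1 - x)⁻¹ := mul_le_mul_of_nonneg_right hx1 hgn
      have hhalf : x ^ N * (1 - x)⁻¹ ≤ 1 / 2 := by
        have hpos : (0:ℝ) < 1 - x := by linarith
        have h1 : x ^ N * (1 - x)⁻¹ ≤ (1 - x) / 2 * (1 - x)⁻¹ :=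
          mul_le_mul_of_nonneg_right hN.le (inv_nonneg.mpr hpos.le)
        have h2 : (1 - x) / 2 * (1 - x)⁻¹ = 1 / 2 := by field_simp
        linarith
      linarith
    have hsplit : ∏ j ∈ range n, (1 - x ^ (j + 1)) =
        (∏ j ∈ range N, (1 - x ^ (j + 1))) * ∏ j ∈ range (n - N), (1 - x ^ (N + j + 1)) := by
      conv_lhs => rw [hm]
      rw [prod_range_add]
    have hfin : (∏ j ∈ range N, (1 - x ^ (j + 1))) / 2 ≤ ∏ j ∈ range n, (1 - x ^ (j + 1)) := by
      rw [hsplit]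
      nlinarith [hQpos N, hT]
    linarith [habs n]

/-! ### Summability -/

lemma iqp_bound {q : ℂ} (hq1 : ‖q‖ < 1) :
    ∃ M : ℝ, 0 < M ∧ ∀ z : ℤ, ‖iqp q z‖ ≤ M := by
  obtain ⟨c, hc, hcle⟩ := qp_lower hq1
  refine ⟨c⁻¹, inv_pos.mpr hc, fun z => ?_⟩
  rw [iqp]
  split
  · rw [norm_inv]
    exact inv_anti₀ hc (hcle _)
  · simp only [norm_zero]
    positivity

lemma summable_tri {q : ℂ} (hq1 : ‖q‖ < 1) : Summable (triSum q) := by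
  obtain ⟨M, hM, hMb⟩ := iqp_bound hq1
  set x := ‖q‖ with hxdef
  have hx0 : 0 ≤ x := norm_nonneg q
  have hgeo : Summable fun n : ℕ => x ^ n := summable_geometric_of_lt_one hx0 hq1
  have h2 : Summable fun p : ℕ × ℕ => x ^ p.1 * x ^ p.2 :=
    hgeo.mul_of_nonneg hgeo (fun n => pow_nonneg hx0 n) fun n => pow_nonneg hx0 n
  have h3 : Summable fun p : ℕ × ℕ × ℕ => x ^ p.1 * (x ^ p.2.1 * x ^ p.2.2) :=
    hgeo.mul_of_nonneg h2 (fun n => pow_nonneg hx0 n)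
      fun p => mul_nonneg (pow_nonneg hx0 _) (pow_nonneg hx0 _)
  refine Summable.of_norm_bounded (h3.mul_left (M * M * M)) fun p => ?_
  obtain ⟨i, j, k⟩ := p
  have e1 : ‖triSum q (i, j, k)‖ ≤ x ^ (i ^ 2 + j ^ 2 + k ^ 2) * (M * (M * M)) := by
    rw [triSum]
    simp only [norm_mul, norm_pow]
    calc ‖q‖ ^ (i ^ 2 + j ^ 2 + k ^ 2) * ‖iqp q _‖ *
          ‖iqp q _‖ * ‖iqp q _‖
        ≤ ‖q‖ ^ (i ^ 2 + j ^ 2 + k ^ 2) * M * M * M := by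
          gcongr <;> first
            | exact hMb _
            | positivity
      _ = x ^ (i ^ 2 + j ^ 2 + k ^ 2) * (M * (M * M)) := by rw [← hxdef]; ring
  have e2 : x ^ (i ^ 2 + j ^ 2 + k ^ 2) ≤ x ^ i * (x ^ j * x ^ k) := by
    rw [← pow_add, ← pow_add]
    refine pow_le_pow_of_le_one hx0 hq1.le ?_
    have h1 : i ≤ i ^ 2 := Nat.le_self_pow two_ne_zero i
    have h2 : j ≤ j ^ 2 := Nat.le_self_pow two_ne_zero j
    have h3 : k ≤ k ^ 2 := Nat.le_self_pow two_ne_zero k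
    omega
  calc ‖triSum q (i, j, k)‖ ≤ x ^ (i ^ 2 + j ^ 2 + k ^ 2) * (M * (M * M)) := e1
    _ ≤ (x ^ i * (x ^ j * x ^ k)) * (M * (M * M)) := by
        exact mul_le_mul_of_nonneg_right e2 (by positivity)
    _ = M * M * M * (x ^ i * (x ^ j * x ^ k)) := by ring

lemma summable_flat {q : ℂ} (hq1 : ‖q‖ < 1) : Summable (flatSum q) := by
  obtain ⟨c, hc, hcle⟩ := qp_lower hq1
  set x := ‖q‖ with hxdef
  have hx0 : 0 ≤ x := norm_nonneg q
  have hgeo : Summable fun n : ℕ => x ^ n := summable_geometric_of_lt_one hx0 hq1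
  have h2 : Summable fun p : ℕ × ℕ => x ^ p.1 * x ^ p.2 :=
    hgeo.mul_of_nonneg hgeo (fun n => pow_nonneg hx0 n) fun n => pow_nonneg hx0 n
  refine Summable.of_norm_bounded (h2.mul_left (c⁻¹ * c⁻¹)) fun p => ?_
  obtain ⟨i, j⟩ := p
  set E : ℕ := (((i : ℤ)) ^ 2 + ((j : ℤ)) ^ 2 + ((i : ℤ) - (j : ℤ)) ^ 2).toNat with hE
  have hEij : i + j ≤ E := by
    have h1 : ((i : ℤ)) ^ 2 + ((j : ℤ)) ^ 2 ≤ ((i : ℤ)) ^ 2 + ((j : ℤ)) ^ 2 + ((i : ℤ) - j) ^ 2 := by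
      nlinarith [sq_nonneg ((i : ℤ) - j)]
    have h2 : (i ^ 2 + j ^ 2 : ℕ) ≤ E := by
      rw [hE]
      have h2' := Int.toNat_le_toNat h1
      rwa [show ((i:ℤ)) ^ 2 + ((j:ℤ)) ^ 2 = ((i ^ 2 + j ^ 2 : ℕ) : ℤ) by push_cast; ring,
        Int.toNat_natCast] at h2'
    have h3 : i ≤ i ^ 2 := Nat.le_self_pow two_ne_zero i
    have h4 : j ≤ j ^ 2 := Nat.le_self_pow two_ne_zero j
    omega
  have hnorm : ‖flatSum q (i, j)‖ ≤ x ^ E * (c * c)⁻¹ := by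
    rw [flatSum]
    simp only [norm_div, norm_mul, norm_pow]
    have hd : c * c ≤ ‖qp q q (2 * i)‖ * ‖qp q q (2 * j)‖ :=
      mul_le_mul (hcle _) (hcle _) hc.le (norm_nonneg _)
    rw [div_eq_mul_inv]
    refine mul_le_mul_of_nonneg_left ?_ (by positivity)
    exact inv_anti₀ (by positivity) hd
  calc ‖flatSum q (i, j)‖ ≤ x ^ E * (c * c)⁻¹ := hnorm
    _ ≤ (x ^ i * x ^ j) * (c * c)⁻¹ := by
        refine mul_le_mul_of_nonneg_right ?_ (by positivity)
        rw [← pow_add]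
        exact pow_le_pow_of_le_one hx0 hq1.le hEij
    _ = c⁻¹ * c⁻¹ * (x ^ i * x ^ j) := by rw [mul_inv]; ring

/-! ### The inner sum over `k` -/

lemma iqp_coe (q : ℂ) (t : ℕ) : iqp q (t : ℤ) = (qp q q t)⁻¹ := by
  rw [iqp, if_pos (Int.natCast_nonneg t), Int.toNat_natCast]

lemma triSum_swap (q : ℂ) (i j k : ℕ) : triSum q (i, j, k) = triSum q (j, i, k) := by
  rw [triSum, triSum]
  simp only
  rw [show (i:ℤ) + j - k = (j:ℤ) + i - k by ring,
    show i ^ 2 + j ^ 2 + k ^ 2 = j ^ 2 + i ^ 2 + k ^ 2 by ring]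
  ring

lemma flatSum_swap (q : ℂ) (i j : ℕ) : flatSum q (i, j) = flatSum q (j, i) := by
  rw [flatSum, flatSum]
  simp only
  rw [show (i:ℤ) ^ 2 + (j:ℤ) ^ 2 + ((i:ℤ) - j) ^ 2 = (j:ℤ) ^ 2 + (i:ℤ) ^ 2 + ((j:ℤ) - i) ^ 2
      by ring,
    mul_comm (qp q q (2 * i)) (qp q q (2 * j))]

lemma finite_eq {q : ℂ} (hq1 : ‖q‖ < 1) (j d : ℕ) :
    ∑ k ∈ range ((j + d) + j + 1), triSum q (j + d, j, k) = flatSum q (j + d, j) := by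
  have hsplit : (j + d) + j + 1 = d + (2 * j + 1) := by omega
  rw [hsplit, Finset.sum_range_add]
  have hzero : ∑ k ∈ range d, triSum q (j + d, j, k) = 0 := by
    refine Finset.sum_eq_zero fun k hk => ?_
    have hk' : k < d := mem_range.mp hk
    have hneg : ¬ (0 ≤ ((j : ℕ) : ℤ) + ((k : ℕ) : ℤ) - ((j + d : ℕ) : ℤ)) := by omega
    rw [triSum]
    simp only
    rw [show iqp q (((j : ℕ) : ℤ) + ((k : ℕ) : ℤ) - ((j + d : ℕ) : ℤ)) = 0 from by
      rw [iqp, if_neg hneg], mul_zero]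
  rw [hzero, zero_add]
  have hterm : ∀ m ∈ range (2 * j + 1), triSum q (j + d, j, d + m) =
      q ^ ((j + d) ^ 2 + j ^ 2 + d ^ 2) *
        (q ^ (m * (m + 2 * d)) *
          ((qp q q m)⁻¹ * ((qp q q (m + 2 * d))⁻¹ * (qp q q (2 * j - m))⁻¹))) := by
    intro m hm
    have hm' : m ≤ 2 * j := by have := mem_range.mp hm; omega
    rw [triSum]
    simp only
    rw [show ((j + d : ℕ) : ℤ) + ((j : ℕ) : ℤ) - ((d + m : ℕ) : ℤ) = ((2 * j - m : ℕ) : ℤ)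
        by omega,
      show ((j + d : ℕ) : ℤ) + ((d + m : ℕ) : ℤ) - ((j : ℕ) : ℤ) = ((2 * d + m : ℕ) : ℤ)
        by omega,
      show ((j : ℕ) : ℤ) + ((d + m : ℕ) : ℤ) - ((j + d : ℕ) : ℤ) = ((m : ℕ) : ℤ) by omega,
      iqp_coe, iqp_coe, iqp_coe]
    rw [show (j + d) ^ 2 + j ^ 2 + (d + m) ^ 2 =
        ((j + d) ^ 2 + j ^ 2 + d ^ 2) + m * (m + 2 * d) by ring, pow_add]
    rw [show 2 * d + m = m + 2 * d by ring]
    ring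
  rw [Finset.sum_congr rfl hterm, ← Finset.mul_sum]
  have hSk : ∑ m ∈ range (2 * j + 1),
      q ^ (m * (m + 2 * d)) *
        ((qp q q m)⁻¹ * ((qp q q (m + 2 * d))⁻¹ * (qp q q (2 * j - m))⁻¹)) =
      (qp q q (2 * j))⁻¹ * (qp q q (2 * j + 2 * d))⁻¹ := Sk_eq hq1 (2 * j) (2 * d)
  rw [hSk, flatSum]
  simp only
  rw [show ((j + d : ℕ) : ℤ) ^ 2 + ((j : ℕ) : ℤ) ^ 2 + (((j + d : ℕ) : ℤ) - ((j : ℕ) : ℤ)) ^ 2 =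
      (((j + d) ^ 2 + j ^ 2 + d ^ 2 : ℕ) : ℤ) by push_cast; ring, Int.toNat_natCast]
  rw [show 2 * (j + d) = 2 * j + 2 * d by ring]
  rw [div_eq_mul_inv, mul_inv]
  ring

lemma inner_eq {q : ℂ} (hq1 : ‖q‖ < 1) (i j : ℕ) :
    ∑' k : ℕ, triSum q (i, j, k) = flatSum q (i, j) := by
  have hvan : ∀ k ∉ range (i + j + 1), triSum q (i, j, k) = 0 := by
    intro k hk
    have hk' : ¬ k < i + j + 1 := fun h => hk (mem_range.mpr h)
    have hneg : ¬ (0 ≤ ((i : ℕ) : ℤ) + ((j : ℕ) : ℤ) - ((k : ℕ) : ℤ)) := by omega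
    rw [triSum]
    simp only
    rw [show iqp q (((i : ℕ) : ℤ) + ((j : ℕ) : ℤ) - ((k : ℕ) : ℤ)) = 0 from by
      rw [iqp, if_neg hneg]]
    ring
  rw [tsum_eq_sum hvan]
  rcases le_total j i with h | h
  · obtain ⟨d, rfl⟩ : ∃ d, i = j + d := ⟨i - j, by omega⟩
    exact finite_eq hq1 j d
  · obtain ⟨d, rfl⟩ : ∃ d, j = i + d := ⟨j - i, by omega⟩
    rw [show i + (i + d) + 1 = (i + d) + i + 1 by omega]
    rw [Finset.sum_congr rfl fun k _ => triSum_swap q i (i + d) k]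
    rw [finite_eq hq1 i d]
    exact flatSum_swap q (i + d) i

theorem tri_pentagonal_flattened (q : ℂ) (hq0 : q ≠ 0) (hq1 : ‖q‖ < 1) :
    Summable (triSum q) ∧ Summable (flatSum q) ∧
    (∑' p : ℕ × ℕ × ℕ, triSum q p) = ∑' p : ℕ × ℕ, flatSum q p := by
  have htri := summable_tri hq1
  have hflat := summable_flat hq1
  refine ⟨htri, hflat, ?_⟩
  rw [Summable.tsum_prod' htri fun b => htri.prod_factor b,
    Summable.tsum_prod' hflat fun b => hflat.prod_factor b]
  refine tsum_congr fun i => ?_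
  rw [Summable.tsum_prod' (htri.prod_factor i) fun b => (htri.prod_factor i).prod_factor b]
  exact tsum_congr fun j => inner_eq hq1 i j
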